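/- arXiv:1502.02997 — 2 statements merged into one kernel-verified Lean document; each statement's English description precedes it below -/
import Mathlib

section
/- Let A be an n × n matrix with nonnegative real entries of block upper-triangular form A = [[B, R],[0, C]], where B is a k × k block and C is an ℓ × ℓ block (k + ℓ = n) and R is an arbitrary k × ℓ nonnegative block. Then sm(A) does not depend on R; that is, sm(A) equals sm(A₀), where A₀ is the matrix obtained from A by replacing R with the zero block. -/
open scoped BigOperators Kronecker
open Matrix

/-- The permanent of a square real matrix. -/
noncomputable def perm {ι : Type*} [Fintype ι] [DecidableEq ι] (A : Matrix ι ι ℝ) : ℝ :=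
  ∑ σ : Equiv.Perm ι, ∏ i, A i (σ i)

/-- The permanental mean `pm A = (per A / n!) ^ (1/n)`. -/
noncomputable def pm {ι : Type*} [Fintype ι] [DecidableEq ι] (A : Matrix ι ι ℝ) : ℝ :=
  (perm A / (Nat.factorial (Fintype.card ι) : ℝ)) ^ ((Fintype.card ι : ℝ)⁻¹)

/-- The geometric mean of the entries of a vector. -/
noncomputable def gmVec {ι : Type*} [Fintype ι] (v : ι → ℝ) : ℝ :=
  (∏ i, v i) ^ ((Fintype.card ι : ℝ)⁻¹)

/-- The set of values whose infimum defines the scaling mean. -/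
noncomputable def smSet {ι κ : Type*} [Fintype ι] [Fintype κ] (A : Matrix ι κ ℝ) : Set ℝ :=
  {r : ℝ | ∃ x : ι → ℝ, ∃ y : κ → ℝ, (∀ i, 0 < x i) ∧ (∀ j, 0 < y j) ∧
    r = (∑ i, ∑ j, x i * A i j * y j) / (gmVec x * gmVec y)}

/-- The scaling mean `sm A = (1/(mn)) · inf over positive vectors x, y of xᵀAy/(gm x · gm y)`. -/
noncomputable def sm {ι κ : Type*} [Fintype ι] [Fintype κ] (A : Matrix ι κ ℝ) : ℝ :=
  ((Fintype.card ι : ℝ) * (Fintype.card κ : ℝ))⁻¹ * sInf (smSet A)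

/-! Conjugating `A` by a positive diagonal matrix `D` only reparametrises the pairs `(x, y)` in
the infimum defining `sm A` (replace them by `(D x, D⁻¹ y)`), and conjugation by
`diag(t, …, t, 1, …, 1)` multiplies the block `R` by `t`. Letting `t → 0` shows that
`sm [[B, R], [0, C]] ≤ sm [[B, 0], [0, C]]`; the reverse inequality holds because `R ≥ 0`. -/

-- Also holds when both sets are empty or both unbounded below, where Lean's `sInf` is `0`.
lemma Real.sInf_eq_sInf_of_forall_exists_le {s t : Set ℝ} (hst : ∀ x ∈ s, ∃ y ∈ t, y ≤ x)
    (hts : ∀ y ∈ t, ∀ ε > 0, ∃ x ∈ s, x ≤ y + ε) : sInf s = sInf t := by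
  by_cases ht : BddBelow t
  swap
  · have hs : ¬BddBelow s := by
      rintro ⟨b, hb⟩
      refine ht ⟨b - 1, fun y hy => ?_⟩
      obtain ⟨x, hx, hxy⟩ := hts y hy 1 one_pos
      linarith [hb hx]
    rw [Real.sInf_of_not_bddBelow hs, Real.sInf_of_not_bddBelow ht]
  obtain rfl | ht₀ := t.eq_empty_or_nonempty
  · have hs : s = ∅ := Set.eq_empty_of_forall_notMem fun x hx => by simpa using hst x hx
    rw [hs]
  have hs : BddBelow s := by
    obtain ⟨b, hb⟩ := ht
    exact ⟨b, fun x hx => by obtain ⟨y, hy, hyx⟩ := hst x hx; exact (hb hy).trans hyx⟩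
  have hs₀ : s.Nonempty := by
    obtain ⟨y, hy⟩ := ht₀
    obtain ⟨x, hx, -⟩ := hts y hy 1 one_pos
    exact ⟨x, hx⟩
  refine le_antisymm (le_of_forall_pos_le_add fun ε hε => ?_) (le_csInf hs₀ fun x hx => ?_)
  · rw [← sub_le_iff_le_add]
    refine le_csInf ht₀ fun y hy => ?_
    obtain ⟨x, hx, hxy⟩ := hts y hy ε hε
    linarith [csInf_le hs hx]
  · obtain ⟨y, hy, hyx⟩ := hst x hx
    exact (csInf_le ht hy).trans hyx

lemma gmVec_pos {ι : Type*} [Fintype ι] {v : ι → ℝ} (hv : ∀ i, 0 < v i) : 0 < gmVec v :=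
  Real.rpow_pos_of_pos (Finset.prod_pos fun i _ => hv i) _

lemma gmVec_mul {ι : Type*} [Fintype ι] {v w : ι → ℝ} (hv : ∀ i, 0 ≤ v i) (hw : ∀ i, 0 ≤ w i) :
    gmVec (v * w) = gmVec v * gmVec w := by
  simp only [gmVec, Pi.mul_apply, Finset.prod_mul_distrib]
  exact Real.mul_rpow (Finset.prod_nonneg fun i _ => hv i) (Finset.prod_nonneg fun i _ => hw i)

lemma gmVec_one {ι : Type*} [Fintype ι] : gmVec (1 : ι → ℝ) = 1 := by
  simp [gmVec]

lemma smSet_diagonal_mul_mul_diagonal_inv_subset {ι : Type*} [Fintype ι] [DecidableEq ι]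
    (A : Matrix ι ι ℝ) {c : ι → ℝ} (hc : ∀ i, 0 < c i) :
    smSet (diagonal c * A * diagonal c⁻¹) ⊆ smSet A := by
  have hc' : ∀ i, 0 < c⁻¹ i := fun i => inv_pos.mpr (hc i)
  rintro _ ⟨x, y, hx, hy, rfl⟩
  refine ⟨c * x, c⁻¹ * y, fun i => mul_pos (hc i) (hx i), fun j => mul_pos (hc' j) (hy j), ?_⟩
  have hgm : gmVec c * gmVec c⁻¹ = 1 := by
    rw [← gmVec_mul (fun i => (hc i).le) (fun i => (hc' i).le),
      show c * c⁻¹ = 1 from funext fun i => mul_inv_cancel₀ (hc i).ne', gmVec_one]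
  rw [gmVec_mul (fun i => (hc i).le) (fun i => (hx i).le),
    gmVec_mul (fun i => (hc' i).le) (fun i => (hy i).le),
    show gmVec c * gmVec x * (gmVec c⁻¹ * gmVec y) = (gmVec c * gmVec c⁻¹) * (gmVec x * gmVec y)
      by ring, hgm, one_mul]
  congr 1
  simp only [mul_diagonal, diagonal_mul, Pi.mul_apply, Pi.inv_apply]
  exact Finset.sum_congr rfl fun i _ => Finset.sum_congr rfl fun j _ => by ring

lemma fromBlocks_smul_topRight_eq_diagonal_conj {m n : Type*} [Fintype m] [Fintype n]
    [DecidableEq m] [DecidableEq n] (B : Matrix m m ℝ) (R : Matrix m n ℝ) (C : Matrix n n ℝ)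
    {t : ℝ} (ht : t ≠ 0) :
    fromBlocks B (t • R) 0 C = diagonal (Sum.elim (fun _ => t) 1) * fromBlocks B R 0 C
      * diagonal (Sum.elim (fun _ => t) 1)⁻¹ := by
  ext (i | i) (j | j) <;> simp [diagonal_mul, mul_diagonal]
  field_simp

lemma smSet_exists_le_of_le {ι κ : Type*} [Fintype ι] [Fintype κ] {A₀ A : Matrix ι κ ℝ}
    (hA : ∀ i j, A₀ i j ≤ A i j) : ∀ w ∈ smSet A, ∃ v ∈ smSet A₀, v ≤ w := by
  rintro _ ⟨x, y, hx, hy, rfl⟩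
  refine ⟨_, ⟨x, y, hx, hy, rfl⟩,
    div_le_div_of_nonneg_right ?_ (mul_pos (gmVec_pos hx) (gmVec_pos hy)).le⟩
  gcongr with i _ j _
  · exact (hy j).le
  · exact (hx i).le
  · exact hA i j

lemma exists_mem_smSet_add_smul_le {ι κ : Type*} [Fintype ι] [Fintype κ] (A E : Matrix ι κ ℝ)
    {v : ℝ} (hv : v ∈ smSet A) {ε : ℝ} (hε : 0 < ε) :
    ∃ t : ℝ, 0 < t ∧ ∃ w ∈ smSet (A + t • E), w ≤ v + ε := by
  obtain ⟨x, y, hx, hy, rfl⟩ := hv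
  set D := gmVec x * gmVec y
  set a := (∑ i, ∑ j, x i * A i j * y j) / D
  set b := (∑ i, ∑ j, x i * E i j * y j) / D
  have hmem : ∀ t : ℝ, a + t * b ∈ smSet (A + t • E) := fun t => by
    refine ⟨x, y, hx, hy, ?_⟩
    have hnum : ∑ i, ∑ j, x i * (A + t • E) i j * y j
        = ∑ i, ∑ j, x i * A i j * y j + t * ∑ i, ∑ j, x i * E i j * y j := by
      simp only [Matrix.add_apply, Matrix.smul_apply, smul_eq_mul, Finset.mul_sum,
        ← Finset.sum_add_distrib]
      exact Finset.sum_congr rfl fun i _ => Finset.sum_congr rfl fun j _ => by ring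
    rw [hnum, add_div, mul_div_assoc]
  have hlim : Filter.Tendsto (fun t : ℝ => a + t * b) (nhdsWithin 0 (Set.Ioi 0)) (nhds a) := by
    refine tendsto_nhdsWithin_of_tendsto_nhds ?_
    have h := (tendsto_const_nhds (x := a)).add
      ((Filter.tendsto_id (x := nhds (0 : ℝ))).mul_const b)
    rwa [zero_mul, add_zero] at h
  obtain ⟨t, ht, hle⟩ := (eventually_mem_nhdsWithin.and
    (hlim.eventually (ge_mem_nhds (lt_add_of_pos_right a hε)))).exists
  exact ⟨t, ht, _, hmem t, hle⟩

lemma sInf_smSet_fromBlocks_eq {m n : Type*} [Fintype m] [Fintype n] (B : Matrix m m ℝ)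
    (R : Matrix m n ℝ) (C : Matrix n n ℝ) (hR : ∀ i j, 0 ≤ R i j) :
    sInf (smSet (fromBlocks B R 0 C)) = sInf (smSet (fromBlocks B 0 0 C)) := by
  classical
  refine Real.sInf_eq_sInf_of_forall_exists_le (smSet_exists_le_of_le ?_) fun v hv ε hε => ?_
  · rintro (i | i) (j | j) <;> simp [hR]
  obtain ⟨t, ht, w, hw, hwv⟩ := exists_mem_smSet_add_smul_le _ (fromBlocks 0 R 0 0) hv hε
  have hblocks : fromBlocks B 0 0 C + t • fromBlocks 0 R 0 0 = fromBlocks B (t • R) 0 C := by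
    simp [fromBlocks_smul, fromBlocks_add]
  rw [hblocks, fromBlocks_smul_topRight_eq_diagonal_conj B R C ht.ne'] at hw
  refine ⟨w, smSet_diagonal_mul_mul_diagonal_inv_subset _ (fun i => ?_) hw, hwv⟩
  rcases i with i | i <;> simp [ht]

theorem stmt_7_general {k l : ℕ} (B : Matrix (Fin k) (Fin k) ℝ) (R : Matrix (Fin k) (Fin l) ℝ)
    (C : Matrix (Fin l) (Fin l) ℝ)
    (hR : ∀ i j, 0 ≤ R i j) :
    sm (Matrix.fromBlocks B R 0 C) = sm (Matrix.fromBlocks B 0 0 C) := by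
  rw [sm, sm, sInf_smSet_fromBlocks_eq B R C hR]

/-- The scaling mean of a block upper-triangular nonnegative matrix
`[[B, R], [0, C]]` does not depend on `R`. -/
theorem stmt_7 {k l : ℕ} (B : Matrix (Fin k) (Fin k) ℝ) (R : Matrix (Fin k) (Fin l) ℝ)
    (C : Matrix (Fin l) (Fin l) ℝ)
    (hB : ∀ i j, 0 ≤ B i j) (hR : ∀ i j, 0 ≤ R i j) (hC : ∀ i j, 0 ≤ C i j) :
    sm (Matrix.fromBlocks B R 0 C) = sm (Matrix.fromBlocks B 0 0 C) :=
  stmt_7_general B R C hR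
end

section
/- For every n × n matrix A with nonnegative real entries, sm(A) = (1/n)·inf over vectors y ∈ ℝⁿ with strictly positive entries of gm(Ay)/gm(y), where gm denotes the geometric mean of the entries of a vector. -/
open scoped BigOperators Kronecker
open Matrix

/-! For a fixed positive `y`, put `v = A y ≥ 0`. By AM-GM, `xᵀ v ≥ n · gm(x) · gm(v)`, and the
choice `xᵢ = 1 / (vᵢ + δ)` gives `xᵀ v / gm(x) ≤ n · gm(v + δ)`, which tends to `n · gm(v)` as
`δ → 0⁺`. Hence the infimum of `xᵀ A y / gm(x)` over positive `x` is `n · gm(A y)`, and the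
outer infimum over `y` yields the formula. -/

open Filter Topology Pointwise

section GeometricMean

variable {ι : Type*} [Fintype ι]

lemma gmVec_pos_s9 {x : ι → ℝ} (hx : ∀ i, 0 < x i) : 0 < gmVec x :=
  Real.rpow_pos_of_pos (Finset.prod_pos fun i _ => hx i) _

lemma gmVec_nonneg {x : ι → ℝ} (hx : ∀ i, 0 ≤ x i) : 0 ≤ gmVec x :=
  Real.rpow_nonneg (Finset.prod_nonneg fun i _ => hx i) _

lemma gmVec_mul_s9 {x y : ι → ℝ} (hx : ∀ i, 0 ≤ x i) (hy : ∀ i, 0 ≤ y i) :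
    gmVec (x * y) = gmVec x * gmVec y := by
  simp only [gmVec, Pi.mul_apply, Finset.prod_mul_distrib]
  exact Real.mul_rpow (Finset.prod_nonneg fun i _ => hx i) (Finset.prod_nonneg fun i _ => hy i)

lemma gmVec_inv {x : ι → ℝ} (hx : ∀ i, 0 ≤ x i) : gmVec x⁻¹ = (gmVec x)⁻¹ := by
  simp only [gmVec, Pi.inv_apply, Finset.prod_inv_distrib]
  exact Real.inv_rpow (Finset.prod_nonneg fun i _ => hx i) _

lemma continuous_gmVec_add_const (v : ι → ℝ) : Continuous fun δ : ℝ => gmVec fun i => v i + δ :=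
  (continuous_finsetProd _ fun i _ => continuous_const.add continuous_id).rpow_const
    fun _ => Or.inr (by positivity)

lemma card_mul_gmVec_le_sum {v : ι → ℝ} (hv : ∀ i, 0 ≤ v i) :
    Fintype.card ι * gmVec v ≤ ∑ i, v i := by
  cases isEmpty_or_nonempty ι
  · simp
  have hcard : (0 : ℝ) < Fintype.card ι := by positivity
  have h := Real.geom_mean_le_arith_mean Finset.univ 1 v (fun _ _ => zero_le_one)
    (by simpa using hcard) fun i _ => hv i
  simp only [Pi.one_apply, Real.rpow_one, Finset.sum_const, Finset.card_univ, nsmul_eq_mul,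
    mul_one, one_mul] at h
  rw [le_div_iff₀ hcard] at h
  simpa [gmVec, mul_comm] using h

lemma card_mul_gmVec_mul_le_sum_mul {x v : ι → ℝ} (hx : ∀ i, 0 ≤ x i) (hv : ∀ i, 0 ≤ v i) :
    Fintype.card ι * (gmVec x * gmVec v) ≤ ∑ i, x i * v i := by
  rw [← gmVec_mul_s9 hx hv]
  exact card_mul_gmVec_le_sum fun i => mul_nonneg (hx i) (hv i)

lemma exists_sum_mul_div_gmVec_lt {v : ι → ℝ} (hv : ∀ i, 0 ≤ v i) {r : ℝ}
    (hr : Fintype.card ι * gmVec v < r) :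
    ∃ x : ι → ℝ, (∀ i, 0 < x i) ∧ (∑ i, x i * v i) / gmVec x < r := by
  have hlim : Tendsto (fun δ : ℝ => Fintype.card ι * gmVec fun i => v i + δ) (𝓝[>] 0)
      (𝓝 (Fintype.card ι * gmVec v)) := by
    simpa using (((continuous_gmVec_add_const v).const_mul _).tendsto 0).mono_left
      nhdsWithin_le_nhds
  obtain ⟨δ, hδr, hδ⟩ := ((hlim.eventually (gt_mem_nhds hr)).and self_mem_nhdsWithin).exists
  have hvδ : ∀ i, 0 < v i + δ := fun i => add_pos_of_nonneg_of_pos (hv i) hδ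
  refine ⟨fun i => (v i + δ)⁻¹, fun i => inv_pos.2 (hvδ i), lt_of_le_of_lt ?_ hδr⟩
  have hsum : ∑ i, (v i + δ)⁻¹ * v i ≤ Fintype.card ι := by
    calc ∑ i, (v i + δ)⁻¹ * v i ≤ ∑ _i : ι, (1 : ℝ) := Finset.sum_le_sum fun i _ => by
          rw [inv_mul_le_one₀ (hvδ i)]; exact le_add_of_nonneg_right (le_of_lt hδ)
      _ = Fintype.card ι := by simp
  change _ / gmVec (fun i => v i + δ)⁻¹ ≤ _
  rw [gmVec_inv fun i => (hvδ i).le, div_inv_eq_mul]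
  exact mul_le_mul_of_nonneg_right hsum (gmVec_nonneg fun i => (hvδ i).le)

end GeometricMean

section ScalingMean

variable {ι κ : Type*} [Fintype ι] [Fintype κ] {A : Matrix ι κ ℝ}

lemma sum_sum_mul_mul_eq_sum_mul_mulVec (x : ι → ℝ) (y : κ → ℝ) :
    ∑ i, ∑ j, x i * A i j * y j = ∑ i, x i * (A *ᵥ y) i := by
  simp [Matrix.mulVec, dotProduct, Finset.mul_sum, mul_assoc]

omit [Fintype ι] in
lemma mulVec_nonneg (hA : ∀ i j, 0 ≤ A i j) {y : κ → ℝ} (hy : ∀ j, 0 ≤ y j) :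
    ∀ i, 0 ≤ (A *ᵥ y) i :=
  fun i => Finset.sum_nonneg fun j _ => mul_nonneg (hA i j) (hy j)

lemma card_mul_gmVec_mulVec_div_nonneg (hA : ∀ i j, 0 ≤ A i j) {y : κ → ℝ}
    (hy : ∀ j, 0 < y j) : 0 ≤ Fintype.card ι * (gmVec (A *ᵥ y) / gmVec y) :=
  mul_nonneg (Nat.cast_nonneg _)
    (div_nonneg (gmVec_nonneg (mulVec_nonneg hA fun j => (hy j).le)) (gmVec_pos_s9 hy).le)

lemma card_mul_gmVec_mulVec_div_le_of_mem_smSet (hA : ∀ i j, 0 ≤ A i j) {r : ℝ}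
    (hr : r ∈ smSet A) :
    ∃ y : κ → ℝ, (∀ j, 0 < y j) ∧ Fintype.card ι * (gmVec (A *ᵥ y) / gmVec y) ≤ r := by
  obtain ⟨x, y, hx, hy, rfl⟩ := hr
  have hgx := gmVec_pos_s9 hx
  have hgy := gmVec_pos_s9 hy
  refine ⟨y, hy, ?_⟩
  calc Fintype.card ι * (gmVec (A *ᵥ y) / gmVec y)
      = Fintype.card ι * (gmVec x * gmVec (A *ᵥ y)) / (gmVec x * gmVec y) := by field_simp
    _ ≤ (∑ i, x i * (A *ᵥ y) i) / (gmVec x * gmVec y) := by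
      gcongr
      exact card_mul_gmVec_mul_le_sum_mul (fun i => (hx i).le)
        (mulVec_nonneg hA fun j => (hy j).le)
    _ = _ := by rw [sum_sum_mul_mul_eq_sum_mul_mulVec]

lemma bddBelow_smSet (hA : ∀ i j, 0 ≤ A i j) : BddBelow (smSet A) := ⟨0, fun r hr => by
  obtain ⟨y, hy, hle⟩ := card_mul_gmVec_mulVec_div_le_of_mem_smSet hA hr
  exact (card_mul_gmVec_mulVec_div_nonneg hA hy).trans hle⟩

lemma sInf_smSet_le (hA : ∀ i j, 0 ≤ A i j) {y : κ → ℝ} (hy : ∀ j, 0 < y j) :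
    sInf (smSet A) ≤ Fintype.card ι * (gmVec (A *ᵥ y) / gmVec y) := by
  refine le_of_forall_gt fun c hc => ?_
  have hgy := gmVec_pos_s9 hy
  obtain ⟨x, hx, hlt⟩ := exists_sum_mul_div_gmVec_lt (mulVec_nonneg hA fun j => (hy j).le)
    (r := c * gmVec y) (by rwa [← mul_div_assoc, div_lt_iff₀ hgy] at hc)
  refine csInf_lt_of_lt (bddBelow_smSet hA) ⟨x, y, hx, hy, rfl⟩ ?_
  rwa [sum_sum_mul_mul_eq_sum_mul_mulVec, ← div_div, div_lt_iff₀ hgy]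

lemma sInf_smSet (hA : ∀ i j, 0 ≤ A i j) :
    sInf (smSet A) = Fintype.card ι *
      sInf {r : ℝ | ∃ y : κ → ℝ, (∀ j, 0 < y j) ∧ r = gmVec (A *ᵥ y) / gmVec y} := by
  set S := {r : ℝ | ∃ y : κ → ℝ, (∀ j, 0 < y j) ∧ r = gmVec (A *ᵥ y) / gmVec y}
  have hS : S.Nonempty := ⟨_, 1, fun _ => one_pos, rfl⟩
  have hbdd : BddBelow ((Fintype.card ι : ℝ) • S) := ⟨0, by
    rintro _ ⟨_, ⟨y, hy, rfl⟩, rfl⟩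
    exact card_mul_gmVec_mulVec_div_nonneg hA hy⟩
  rw [← smul_eq_mul, ← Real.sInf_smul_of_nonneg (Nat.cast_nonneg _)]
  apply le_antisymm
  · refine le_csInf hS.smul_set ?_
    rintro _ ⟨_, ⟨y, hy, rfl⟩, rfl⟩
    exact sInf_smSet_le hA hy
  · refine le_csInf ⟨_, 1, 1, fun _ => one_pos, fun _ => one_pos, rfl⟩ fun r hr => ?_
    obtain ⟨y, hy, hle⟩ := card_mul_gmVec_mulVec_div_le_of_mem_smSet hA hr
    exact (csInf_le hbdd ⟨_, ⟨y, hy, rfl⟩, rfl⟩).trans hle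

end ScalingMean

/-- Alternative characterization of the scaling mean:
`sm A = (1/n) · inf over positive y of gm(Ay)/gm(y)`. -/
theorem stmt_9 {n : ℕ} (A : Matrix (Fin n) (Fin n) ℝ) (hA : ∀ i j, 0 ≤ A i j) :
    sm A = (n : ℝ)⁻¹ *
      sInf {r : ℝ | ∃ y : Fin n → ℝ, (∀ j, 0 < y j) ∧
        r = gmVec (A.mulVec y) / gmVec y} := by
  rw [sm, sInf_smSet hA, Fintype.card_fin, ← mul_assoc, mul_inv, mul_assoc _ _ (n : ℝ)]
  rcases eq_or_ne (n : ℝ) 0 with hn | hn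
  · simp [hn]
  · rw [inv_mul_cancel₀ hn, mul_one]
end
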